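/- For any synchronizing automaton 𝒜, any v-minimal word u and any i ∈ supp(u), the relation σ_i on ℐ_i is right-compatible with the product: if g σ_i f, then for every word a ∈ Σ* one has (g·θ_i(a)) σ_i (f·θ_i(a)). -/

import Mathlib

open scoped BigOperators

set_option synthInstance.maxHeartbeats 1000000
set_option maxHeartbeats 1000000

noncomputable section

/-- Action of a word on a state: `q · u`. -/
def actW {Q A : Type*} (δ : Q → A → Q) (q : Q) (u : List A) : Q :=
  u.foldl δ q

/-- The image `Q · u` of the full state set under a word. -/
def imageSet {Q A : Type*} [Fintype Q] [DecidableEq Q] (δ : Q → A → Q) (u : List A) :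
    Finset Q :=
  Finset.image (fun q => actW δ q u) Finset.univ

/-- The rank `rk(u) = |Q · u|` of a word. -/
def wordRank {Q A : Type*} [Fintype Q] [DecidableEq Q] (δ : Q → A → Q) (u : List A) : ℕ :=
  (imageSet δ u).card

/-- A word is reset (synchronizing) if `|Q · u| = 1`. -/
def IsReset {Q A : Type*} [Fintype Q] [DecidableEq Q] (δ : Q → A → Q) (u : List A) : Prop :=
  wordRank δ u = 1

/-- The automaton is synchronizing if it admits a reset word. -/
def IsSynchronizing {Q A : Type*} [Fintype Q] [DecidableEq Q] (δ : Q → A → Q) : Prop :=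
  ∃ u : List A, IsReset δ u

/-- `Syn(𝒜)`, the set of reset words. -/
def SynWords {Q A : Type*} [Fintype Q] [DecidableEq Q] (δ : Q → A → Q) : Set (List A) :=
  {u | IsReset δ u}

/-- The hyperplane `w⊥ = {v ∈ ℂQ : ∑ q, v q = 0}`. -/
def Wperp (Q : Type*) [Fintype Q] : Submodule ℂ (Q → ℂ) :=
  LinearMap.ker (∑ q : Q, (LinearMap.proj q : (Q → ℂ) →ₗ[ℂ] ℂ))

theorem mem_Wperp {Q : Type*} [Fintype Q] (v : Q → ℂ) :
    v ∈ Wperp Q ↔ ∑ q : Q, v q = 0 := by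
  simp [Wperp, LinearMap.mem_ker, LinearMap.sum_apply]

/-- The (right) action of a word on row vectors `v ↦ v·π(u)`. -/
def piLin {Q A : Type*} [Fintype Q] [DecidableEq Q] (δ : Q → A → Q) (u : List A) :
    (Q → ℂ) →ₗ[ℂ] (Q → ℂ) where
  toFun v := fun p => ∑ q ∈ Finset.univ.filter (fun q => actW δ q u = p), v q
  map_add' := by
    intro a b; funext p; simp [Finset.sum_add_distrib]
  map_smul' := by
    intro c v; funext p; simp [Finset.mul_sum]

theorem piLin_mem {Q A : Type*} [Fintype Q] [DecidableEq Q] (δ : Q → A → Q) (u : List A) :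
    ∀ v ∈ Wperp Q, piLin δ u v ∈ Wperp Q := by
  intro v hv
  rw [mem_Wperp] at hv ⊢
  have h := Finset.sum_fiberwise (Finset.univ : Finset Q) (fun q => actW δ q u) v
  calc ∑ p : Q, piLin δ u v p
      = ∑ p : Q, ∑ q ∈ Finset.univ.filter (fun q => actW δ q u = p), v q := rfl
    _ = ∑ q : Q, v q := h
    _ = 0 := hv

/-- The endomorphism of `w⊥` induced by a word. -/
def rhoEnd {Q A : Type*} [Fintype Q] [DecidableEq Q] (δ : Q → A → Q) (u : List A) :
    Module.End ℂ (Wperp Q) :=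
  (piLin δ u).restrict (piLin_mem δ u)

/-- The representation `ρ : Σ* → End(w⊥)`; we record it in the multiplicative opposite so
that `ρ (u ++ v) = ρ u * ρ v` (the paper's right-action convention). -/
def rho {Q A : Type*} [Fintype Q] [DecidableEq Q] (δ : Q → A → Q) (u : List A) :
    (Module.End ℂ (Wperp Q))ᵐᵒᵖ :=
  MulOpposite.op (rhoEnd δ u)

/-- `ℛ`, the ℂ-subalgebra generated by `ρ(Σ*)`. -/
def Ralg {Q A : Type*} [Fintype Q] [DecidableEq Q] (δ : Q → A → Q) :
    Subalgebra ℂ (Module.End ℂ (Wperp Q))ᵐᵒᵖ :=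
  Algebra.adjoin ℂ (Set.range (rho δ))

/-- `ρ(u)` seen as an element of `ℛ`. -/
def rhoR {Q A : Type*} [Fintype Q] [DecidableEq Q] (δ : Q → A → Q) (u : List A) :
    Ralg δ :=
  ⟨rho δ u, Algebra.subset_adjoin (Set.mem_range_self u)⟩

/-- The Jacobson radical `Rad(ℛ)` of `ℛ`, realised as a subset of the ambient algebra via
the standard characterisation: `x ∈ Rad(ℛ)` iff `x ∈ ℛ` and for every `y ∈ ℛ` the element
`1 - y * x` is left-invertible in `ℛ`. -/
def RadSet {Q A : Type*} [Fintype Q] [DecidableEq Q] (δ : Q → A → Q) :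
    Set (Module.End ℂ (Wperp Q))ᵐᵒᵖ :=
  {x | x ∈ Ralg δ ∧ ∀ y ∈ Ralg δ, ∃ z ∈ Ralg δ, z * (1 - y * x) = 1}

/-- `Rad(𝒜)`: the set of radical words, i.e. words `u` with `ρ(u) ∈ Rad(ℛ)`. -/
def RadWords {Q A : Type*} [Fintype Q] [DecidableEq Q] (δ : Q → A → Q) : Set (List A) :=
  {u | rho δ u ∈ RadSet δ}

/-- The automaton is semisimple when `Rad(𝒜) = Syn(𝒜)`. -/
def IsSemisimple {Q A : Type*} [Fintype Q] [DecidableEq Q] (δ : Q → A → Q) : Prop :=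
  RadWords δ = SynWords δ

/-- The `t`-packing number `D(t,r,n)`: the maximum size of a family of `r`-subsets of an
`n`-set in which every `t`-subset is contained in at most one member. -/
def packingNumber (t r n : ℕ) : ℕ :=
  sSup {m | ∃ F : Finset (Finset (Fin n)), F.card = m ∧ (∀ S ∈ F, S.card = r) ∧
    ∀ T : Finset (Fin n), T.card = t → (F.filter fun S => T ⊆ S).card ≤ 1}

/-- The former-rank `Fr(𝒜)`: the least rank of a non-reset word. -/
def formerRank {Q A : Type*} [Fintype Q] [DecidableEq Q] (δ : Q → A → Q) : ℕ :=
  sInf {m | ∃ u : List A, ¬ IsReset δ u ∧ wordRank δ u = m}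

/-- `Fs(𝒜)`: the set of former-synchronizing words. -/
def Fs {Q A : Type*} [Fintype Q] [DecidableEq Q] (δ : Q → A → Q) : Set (List A) :=
  {u | wordRank δ u = formerRank δ}

/-- `θ_i(u)`: the image of `ρ(u)` in the `i`-th Wedderburn–Artin matrix component, where
`e : ℛ → ∏ i, M_{n_i}(ℂ)` is the quotient map `ψ` followed by the fixed isomorphism. -/
def theta {Q A : Type*} [Fintype Q] [DecidableEq Q] (δ : Q → A → Q) {k : ℕ} {nn : Fin k → ℕ}
    (e : Ralg δ →ₐ[ℂ] ∀ i : Fin k, Matrix (Fin (nn i)) (Fin (nn i)) ℂ)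
    (u : List A) (i : Fin k) : Matrix (Fin (nn i)) (Fin (nn i)) ℂ :=
  e (rhoR δ u) i

/-- `supp(v) = {i : θ_i(v) ≠ 0}`. -/
def suppW {Q A : Type*} [Fintype Q] [DecidableEq Q] (δ : Q → A → Q) {k : ℕ} {nn : Fin k → ℕ}
    (e : Ralg δ →ₐ[ℂ] ∀ i : Fin k, Matrix (Fin (nn i)) (Fin (nn i)) ℂ)
    (v : List A) : Set (Fin k) :=
  {i | theta δ e v i ≠ 0}

/-- `u ∈ Σ* v Σ*`, i.e. `v` is a factor of `u`. -/
def InFactor {A : Type*} (v u : List A) : Prop :=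
  ∃ a b : List A, u = a ++ v ++ b

/-- `u` is a `v`-minimal word: `u ∈ Σ*vΣ*`, `supp(u)` is nonempty, and `supp(u)` is minimal
among the nonempty supports of words in `Σ*vΣ*`. -/
def IsVMinimal {Q A : Type*} [Fintype Q] [DecidableEq Q] (δ : Q → A → Q) {k : ℕ}
    {nn : Fin k → ℕ}
    (e : Ralg δ →ₐ[ℂ] ∀ i : Fin k, Matrix (Fin (nn i)) (Fin (nn i)) ℂ)
    (v u : List A) : Prop :=
  InFactor v u ∧ (suppW δ e u).Nonempty ∧
    ∀ z : List A, InFactor v z → suppW δ e z ⊆ suppW δ e u →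
      suppW δ e z = ∅ ∨ suppW δ e z = suppW δ e u

/-- The `i`-th factor monoid `ℳ_i = θ_i(Σ*)`. -/
def factorMonoid {Q A : Type*} [Fintype Q] [DecidableEq Q] (δ : Q → A → Q) {k : ℕ}
    {nn : Fin k → ℕ}
    (e : Ralg δ →ₐ[ℂ] ∀ i : Fin k, Matrix (Fin (nn i)) (Fin (nn i)) ℂ)
    (i : Fin k) : Set (Matrix (Fin (nn i)) (Fin (nn i)) ℂ) :=
  Set.range fun u : List A => theta δ e u i

/-- A two-sided ideal of the (sub)monoid `M`. -/
def IsSetIdeal {X : Type*} [Mul X] (M I : Set X) : Prop :=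
  I ⊆ M ∧ ∀ a ∈ M, ∀ x ∈ I, a * x ∈ I ∧ x * a ∈ I

/-- `I` is a `0`-minimal (two-sided) ideal of the monoid `M`. -/
def IsZeroMinimalIdeal {X : Type*} [Mul X] [Zero X] (M I : Set X) : Prop :=
  IsSetIdeal M I ∧ (0 : X) ∈ I ∧ I ≠ {0} ∧
    ∀ J : Set X, IsSetIdeal M J → (0 : X) ∈ J → J ⊆ I → J ≠ {0} → J = I

/-- `Rnk_i(g) = min {rk(u) : θ_i(u) = g}`. -/
def rnkElt {Q A : Type*} [Fintype Q] [DecidableEq Q] (δ : Q → A → Q) {k : ℕ}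
    {nn : Fin k → ℕ}
    (e : Ralg δ →ₐ[ℂ] ∀ i : Fin k, Matrix (Fin (nn i)) (Fin (nn i)) ℂ)
    (i : Fin k) (g : Matrix (Fin (nn i)) (Fin (nn i)) ℂ) : ℕ :=
  sInf {m | ∃ u : List A, theta δ e u i = g ∧ wordRank δ u = m}

/-- `Rnk(ℐ_i) = min {Rnk_i(g) : g ∈ ℐ_i ∖ {0}}`. -/
def rnkIdeal {Q A : Type*} [Fintype Q] [DecidableEq Q] (δ : Q → A → Q) {k : ℕ}
    {nn : Fin k → ℕ}
    (e : Ralg δ →ₐ[ℂ] ∀ i : Fin k, Matrix (Fin (nn i)) (Fin (nn i)) ℂ)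
    (i : Fin k) (I : Set (Matrix (Fin (nn i)) (Fin (nn i)) ℂ)) : ℕ :=
  sInf {m | ∃ g ∈ I, g ≠ 0 ∧ rnkElt δ e i g = m}

/-- `w` `u`-represents `g`: `w ∈ Σ*uΣ*`, `θ_i(w) = g`, and either `g = 0` or `rk(w)` is
minimum among all words with the first two properties. -/
def URepresents {Q A : Type*} [Fintype Q] [DecidableEq Q] (δ : Q → A → Q) {k : ℕ}
    {nn : Fin k → ℕ}
    (e : Ralg δ →ₐ[ℂ] ∀ i : Fin k, Matrix (Fin (nn i)) (Fin (nn i)) ℂ)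
    (u : List A) (i : Fin k) (w : List A) (g : Matrix (Fin (nn i)) (Fin (nn i)) ℂ) : Prop :=
  InFactor u w ∧ theta δ e w i = g ∧
    (g = 0 ∨ ∀ w' : List A, InFactor u w' → theta δ e w' i = g → wordRank δ w ≤ wordRank δ w')

/-- The relation `σ_i` on `ℐ_i`. -/
def sigmaRel {Q A : Type*} [Fintype Q] [DecidableEq Q] (δ : Q → A → Q) {k : ℕ}
    {nn : Fin k → ℕ}
    (e : Ralg δ →ₐ[ℂ] ∀ i : Fin k, Matrix (Fin (nn i)) (Fin (nn i)) ℂ)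
    (i : Fin k) (u : List A)
    (g f : Matrix (Fin (nn i)) (Fin (nn i)) ℂ) : Prop :=
  g = f ∨ ∃ w₁ w₂ : List A, URepresents δ e u i w₁ g ∧ URepresents δ e u i w₂ f ∧
    1 < (imageSet δ w₁ ∩ imageSet δ w₂).card

/-- `T ⊆ [1,k]` is a core. -/
def IsCore {Q A : Type*} [Fintype Q] [DecidableEq Q] (δ : Q → A → Q) {k : ℕ}
    {nn : Fin k → ℕ}
    (e : Ralg δ →ₐ[ℂ] ∀ i : Fin k, Matrix (Fin (nn i)) (Fin (nn i)) ℂ)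
    (T : Set (Fin k)) : Prop :=
  ∀ x : List A, (∀ i ∈ T, theta δ e x i = 0) → ∀ i : Fin k, theta δ e x i = 0

/-- A minimal core. -/
def IsMinimalCore {Q A : Type*} [Fintype Q] [DecidableEq Q] (δ : Q → A → Q) {k : ℕ}
    {nn : Fin k → ℕ}
    (e : Ralg δ →ₐ[ℂ] ∀ i : Fin k, Matrix (Fin (nn i)) (Fin (nn i)) ℂ)
    (T : Set (Fin k)) : Prop :=
  IsCore δ e T ∧ ∀ T' : Set (Fin k), T' ⊆ T → IsCore δ e T' → T' = T

/-- An automaton congruence. -/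
def IsCongruence {Q A : Type*} (δ : Q → A → Q) (σ : Q → Q → Prop) : Prop :=
  Equivalence σ ∧ ∀ q p : Q, σ q p → ∀ u : List A, σ (actW δ q u) (actW δ p u)

/-- A simple automaton: the only congruences are the identity and the universal relation. -/
def IsSimple {Q A : Type*} (δ : Q → A → Q) : Prop :=
  ∀ σ : Q → Q → Prop, IsCongruence δ σ → σ = Eq ∨ σ = fun _ _ => True


/-!
If `w` `u`-represents an element `g` of the `0`-minimal ideal `ℐ_i`, then `w ++ a` `u`-represents
`g θ_i(a)`, and when `g θ_i(a) ≠ 0` it even has the rank of `w`: by `0`-minimality,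
`g ∈ ℳ_i (g θ_i(a)) ℳ_i`, so any representative of `g θ_i(a)` can be sandwiched into a word of
`Σ*uΣ*` mapping to `g`, and sandwiching does not increase the rank. Rank preservation means that
`a` acts injectively on `Q · w`, hence keeps two common states of `Q · w₁` and `Q · w₂` apart.
-/

theorem IsZeroMinimalIdeal.exists_mul_mul_eq {X : Type*} [MonoidWithZero X] {M : Submonoid X}
    {I : Set X} (hI : IsZeroMinimalIdeal (M : Set X) I) {g f : X} (hg : g ∈ I) (hg0 : g ≠ 0)
    (hf : f ∈ I) (hf0 : f ≠ 0) : ∃ p ∈ M, ∃ q ∈ M, p * g * q = f := by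
  obtain ⟨⟨hIM, hImul⟩, hI0, -, hImin⟩ := hI
  let J : Set X := insert 0 {x | ∃ p ∈ M, ∃ q ∈ M, p * g * q = x}
  have hgM : g ∈ M := hIM hg
  have hJideal : IsSetIdeal (M : Set X) J := by
    refine ⟨?_, fun a ha x hx => ?_⟩
    · rintro x (rfl | ⟨p, hp, q, hq, rfl⟩)
      · exact hIM hI0
      · exact M.mul_mem (M.mul_mem hp hgM) hq
    · rcases hx with rfl | ⟨p, hp, q, hq, rfl⟩
      · simp [J]
      · exact ⟨Or.inr ⟨a * p, M.mul_mem ha hp, q, hq, by simp only [mul_assoc]⟩,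
          Or.inr ⟨p, hp, q * a, M.mul_mem hq ha, by simp only [mul_assoc]⟩⟩
  have hJI : J ⊆ I := by
    rintro x (rfl | ⟨p, hp, q, hq, rfl⟩)
    · exact hI0
    · exact (hImul q hq _ (hImul p hp g hg).1).2
  have hgJ : g ∈ J := Or.inr ⟨1, M.one_mem, 1, M.one_mem, by simp⟩
  have hJ0 : J ≠ {0} := fun h => hg0 (by simpa [h] using hgJ)
  have hfJ : f ∈ J := hImin J hJideal (Set.mem_insert _ _) hJI hJ0 ▸ hf
  exact hfJ.resolve_left hf0

theorem InFactor.append_append {A : Type*} {u w : List A} (h : InFactor u w) (x y : List A) :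
    InFactor u (x ++ w ++ y) := by
  obtain ⟨p, q, rfl⟩ := h
  exact ⟨x ++ p, q ++ y, by simp⟩

theorem Finset.card_inter_le_card_image_inter {α β : Type*} [DecidableEq α] [DecidableEq β]
    {f : α → β} {s t : Finset α} (hf : Set.InjOn f s) :
    (s ∩ t).card ≤ (s.image f ∩ t.image f).card := by
  rw [← Finset.card_image_of_injOn (hf.mono (Finset.coe_subset.mpr Finset.inter_subset_left))]
  exact Finset.card_le_card (Finset.image_inter_subset _ _ _)

theorem actW_append {Q A : Type*} (δ : Q → A → Q) (q : Q) (x y : List A) :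
    actW δ q (x ++ y) = actW δ (actW δ q x) y :=
  List.foldl_append

section Automaton

variable {Q A : Type*} [Fintype Q] [DecidableEq Q] (δ : Q → A → Q)

theorem imageSet_append (x y : List A) :
    imageSet δ (x ++ y) = (imageSet δ x).image (fun q => actW δ q y) := by
  simp only [imageSet, Finset.image_image, Function.comp_def, actW_append]

theorem imageSet_append_subset_right (x y : List A) : imageSet δ (x ++ y) ⊆ imageSet δ y := by
  rw [imageSet_append]
  exact Finset.image_subset_iff.mpr fun q _ =>
    Finset.mem_image_of_mem (fun q => actW δ q y) (Finset.mem_univ q)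

theorem wordRank_append_le_left (x y : List A) : wordRank δ (x ++ y) ≤ wordRank δ x := by
  rw [wordRank, imageSet_append]
  exact Finset.card_image_le

theorem wordRank_append_le_right (x y : List A) : wordRank δ (x ++ y) ≤ wordRank δ y :=
  Finset.card_le_card (imageSet_append_subset_right δ x y)

theorem wordRank_append_append_le (x w y : List A) : wordRank δ (x ++ w ++ y) ≤ wordRank δ w :=
  (wordRank_append_le_left δ _ y).trans (wordRank_append_le_right δ x w)

theorem injOn_imageSet_of_wordRank_append_eq {w a : List A}
    (h : wordRank δ (w ++ a) = wordRank δ w) :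
    Set.InjOn (fun q => actW δ q a) (imageSet δ w) := by
  rwa [← Finset.card_image_iff, ← imageSet_append]

theorem one_lt_card_inter_imageSet_append {w₁ w₂ a : List A}
    (hrk : wordRank δ (w₁ ++ a) = wordRank δ w₁ ∨ wordRank δ (w₂ ++ a) = wordRank δ w₂)
    (hcard : 1 < (imageSet δ w₁ ∩ imageSet δ w₂).card) :
    1 < (imageSet δ (w₁ ++ a) ∩ imageSet δ (w₂ ++ a)).card := by
  simp only [imageSet_append]
  rcases hrk with h | h
  · exact hcard.trans_le
      (Finset.card_inter_le_card_image_inter (injOn_imageSet_of_wordRank_append_eq δ h))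
  · rw [Finset.inter_comm] at hcard ⊢
    exact hcard.trans_le
      (Finset.card_inter_le_card_image_inter (injOn_imageSet_of_wordRank_append_eq δ h))

theorem piLin_nil (v : Q → ℂ) : piLin δ ([] : List A) v = v := by
  funext p
  change ∑ q ∈ Finset.univ.filter (fun q => q = p), v q = v p
  rw [Finset.sum_filter, Finset.sum_ite_eq', if_pos (Finset.mem_univ p)]

theorem piLin_append (x y : List A) (v : Q → ℂ) :
    piLin δ (x ++ y) v = piLin δ y (piLin δ x v) := by
  funext p
  change ∑ q ∈ Finset.univ.filter (fun q => actW δ q (x ++ y) = p), v q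
      = ∑ r ∈ Finset.univ.filter (fun r => actW δ r y = p),
          ∑ q ∈ Finset.univ.filter (fun q => actW δ q x = r), v q
  rw [Finset.sum_fiberwise_eq_sum_filter]
  exact Finset.sum_congr (by ext q; simp [actW_append]) fun _ _ => rfl

theorem rhoR_nil : rhoR δ ([] : List A) = 1 := by
  refine Subtype.ext (MulOpposite.unop_injective (LinearMap.ext fun v => Subtype.ext ?_))
  exact piLin_nil δ v

theorem rhoR_append (x y : List A) : rhoR δ (x ++ y) = rhoR δ x * rhoR δ y := by
  refine Subtype.ext (MulOpposite.unop_injective (LinearMap.ext fun v => Subtype.ext ?_))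
  exact piLin_append δ x y v

variable {k : ℕ} {nn : Fin k → ℕ}
  (e : Ralg δ →ₐ[ℂ] ∀ i : Fin k, Matrix (Fin (nn i)) (Fin (nn i)) ℂ)

theorem theta_nil (i : Fin k) : theta δ e ([] : List A) i = 1 := by
  simp only [theta, rhoR_nil, map_one, Pi.one_apply]

theorem theta_append (x y : List A) (i : Fin k) :
    theta δ e (x ++ y) i = theta δ e x i * theta δ e y i := by
  simp only [theta, rhoR_append, map_mul, Pi.mul_apply]

def factorSubmonoid (i : Fin k) : Submonoid (Matrix (Fin (nn i)) (Fin (nn i)) ℂ) where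
  carrier := factorMonoid δ e i
  mul_mem' := by
    rintro _ _ ⟨x, rfl⟩ ⟨y, rfl⟩
    exact ⟨x ++ y, theta_append δ e x y i⟩
  one_mem' := ⟨[], theta_nil δ e i⟩

variable {δ e} {i : Fin k} {I : Set (Matrix (Fin (nn i)) (Fin (nn i)) ℂ)}
  {u w : List A} {g : Matrix (Fin (nn i)) (Fin (nn i)) ℂ}

theorem URepresents.wordRank_le (hI : IsZeroMinimalIdeal (factorMonoid δ e i) I)
    (hw : URepresents δ e u i w g) (hg : g ∈ I) (hg0 : g ≠ 0)
    {f : Matrix (Fin (nn i)) (Fin (nn i)) ℂ} (hf : f ∈ I) (hf0 : f ≠ 0)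
    {w' : List A} (hw' : InFactor u w') (hθ : theta δ e w' i = f) :
    wordRank δ w ≤ wordRank δ w' := by
  obtain ⟨_, ⟨x, rfl⟩, _, ⟨y, rfl⟩, hxy⟩ :=
    IsZeroMinimalIdeal.exists_mul_mul_eq (M := factorSubmonoid δ e i) hI hf hf0 hg hg0
  have hθ' : theta δ e (x ++ w' ++ y) i = g := by rw [theta_append, theta_append, hθ, hxy]
  exact (hw.2.2.resolve_left hg0 _ (hw'.append_append x y) hθ').trans
    (wordRank_append_append_le δ x w' y)

theorem URepresents.wordRank_append_eq (hI : IsZeroMinimalIdeal (factorMonoid δ e i) I)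
    (hw : URepresents δ e u i w g) (hg : g ∈ I) {a : List A} (hga : g * theta δ e a i ≠ 0) :
    wordRank δ (w ++ a) = wordRank δ w := by
  have hg0 : g ≠ 0 := fun h => hga (by rw [h, zero_mul])
  refine le_antisymm (wordRank_append_le_left δ w a) (hw.wordRank_le hI hg hg0 ?_ hga ?_ ?_)
  · exact (hI.1.2 _ ⟨a, rfl⟩ g hg).2
  · simpa using hw.1.append_append [] a
  · rw [theta_append, hw.2.1]

theorem URepresents.append (hI : IsZeroMinimalIdeal (factorMonoid δ e i) I)
    (hw : URepresents δ e u i w g) (hg : g ∈ I) (a : List A) :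
    URepresents δ e u i (w ++ a) (g * theta δ e a i) := by
  refine ⟨by simpa using hw.1.append_append [] a, by rw [theta_append, hw.2.1], ?_⟩
  by_cases hga : g * theta δ e a i = 0
  · exact Or.inl hga
  have hg0 : g ≠ 0 := fun h => hga (by rw [h, zero_mul])
  refine Or.inr fun w' hw' hθ => ?_
  rw [hw.wordRank_append_eq hI hg hga]
  exact hw.wordRank_le hI hg hg0 (hI.1.2 _ ⟨a, rfl⟩ g hg).2 hga hw' hθ

end Automaton

theorem stmt7_general {Q A : Type*} [Fintype Q] [DecidableEq Q] (δ : Q → A → Q)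
    {k : ℕ} {nn : Fin k → ℕ}
    (e : Ralg δ →ₐ[ℂ] ∀ i : Fin k, Matrix (Fin (nn i)) (Fin (nn i)) ℂ)
    (Ii : ∀ i : Fin k, Set (Matrix (Fin (nn i)) (Fin (nn i)) ℂ))
    (hIi : ∀ i : Fin k, IsZeroMinimalIdeal (factorMonoid δ e i) (Ii i))
    (u : List A) (i : Fin k)
    (g f : Matrix (Fin (nn i)) (Fin (nn i)) ℂ) (hg : g ∈ Ii i) (hf : f ∈ Ii i)
    (hgf : sigmaRel δ e i u g f) :
    ∀ a : List A, sigmaRel δ e i u (g * theta δ e a i) (f * theta δ e a i) := by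
  intro a
  rcases hgf with rfl | ⟨w₁, w₂, h₁, h₂, hcard⟩
  · exact Or.inl rfl
  by_cases heq : g * theta δ e a i = f * theta δ e a i
  · exact Or.inl heq
  refine Or.inr ⟨w₁ ++ a, w₂ ++ a, h₁.append (hIi i) hg a, h₂.append (hIi i) hf a,
    one_lt_card_inter_imageSet_append δ ?_ hcard⟩
  by_cases hga : g * theta δ e a i = 0
  · exact Or.inr (h₂.wordRank_append_eq (hIi i) hf fun hfa => heq (hga.trans hfa.symm))
  · exact Or.inl (h₁.wordRank_append_eq (hIi i) hg hga)

theorem stmt7 {Q A : Type*} [Fintype Q] [DecidableEq Q] (δ : Q → A → Q)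
    {k : ℕ} {nn : Fin k → ℕ}
    (e : Ralg δ →ₐ[ℂ] ∀ i : Fin k, Matrix (Fin (nn i)) (Fin (nn i)) ℂ)
    (he_surj : Function.Surjective e)
    (he_ker : ∀ x : Ralg δ, e x = 0 ↔ (x : (Module.End ℂ (Wperp Q))ᵐᵒᵖ) ∈ RadSet δ)
    (Ii : ∀ i : Fin k, Set (Matrix (Fin (nn i)) (Fin (nn i)) ℂ))
    (hIi : ∀ i : Fin k, IsZeroMinimalIdeal (factorMonoid δ e i) (Ii i))
    (hIuniq : ∀ (i : Fin k) (J : Set (Matrix (Fin (nn i)) (Fin (nn i)) ℂ)),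
      IsZeroMinimalIdeal (factorMonoid δ e i) J → J = Ii i)
    (hsync : IsSynchronizing δ)
    (v u : List A) (hu : IsVMinimal δ e v u) (i : Fin k) (hi : i ∈ suppW δ e u)
    (g f : Matrix (Fin (nn i)) (Fin (nn i)) ℂ) (hg : g ∈ Ii i) (hf : f ∈ Ii i)
    (hgf : sigmaRel δ e i u g f) :
    ∀ a : List A, sigmaRel δ e i u (g * theta δ e a i) (f * theta δ e a i) :=
  stmt7_general δ e Ii hIi u i g f hg hf hgf

end
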